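/- arXiv:1911.08968 — 4 statements merged into one kernel-verified Lean document; each statement's English description precedes it below -/
import Mathlib

section
/- Under the bijection between binary sequences of length n+1 and the union over h+w = n+1 of the sets Y_{h,w}, the generator of the cyclic action corresponds to the map sending λ ∈ Y_{h,w} to λ' = (λ_1,…,λ_h,0) ∈ Y_{h+1,w−1} if λ_1 < w, and to λ' = (λ_2+1, λ_3+1, …, λ_h+1) ∈ Y_{h−1,w+1} if λ_1 = w. -/
/-- The Young diagram associated to a binary sequence `a` with exactly `h` zeros (`false`s),
at positions `l_1 < ⋯ < l_h` (1-based): the diagram `(l_h − h, …, l_1 − 1)`. -/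
def diagOf {N : ℕ} (h : ℕ) (a : Fin N → Bool) : ℕ → ℕ :=
  fun k =>
    if k < h then
      (Finset.univ.filter (fun i : Fin N => a i = true ∧
        (Finset.univ.filter (fun j : Fin N => j ≤ i ∧ a j = false)).card + k + 1 ≤ h)).card
    else 0

/-- The cyclic operation `a_0 a_1 ⋯ a_n ↦ (1 − a_n) a_0 a_1 ⋯ a_{n−1}`. -/
def cshift (n : ℕ) (a : Fin (n + 1) → Bool) : Fin (n + 1) → Bool :=
  fun i =>
    if (i : ℕ) = 0 then ! a (Fin.last n)
    else a ⟨(i : ℕ) - 1, lt_of_le_of_lt (Nat.sub_le _ _) i.isLt⟩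

namespace CshiftAux

def Z {N : ℕ} (a : Fin N → Bool) (i : Fin N) : ℕ :=
  (Finset.univ.filter (fun j : Fin N => j ≤ i ∧ a j = false)).card

lemma Z_eq_sum {N : ℕ} (a : Fin N → Bool) (i : Fin N) :
    Z a i = ∑ j : Fin N, (if j ≤ i ∧ a j = false then 1 else 0) := by
  rw [Z, Finset.card_filter]

lemma diagOf_eq_sum {N : ℕ} {h k : ℕ} (hk : k < h) (a : Fin N → Bool) :
    diagOf h a k = ∑ i : Fin N, (if a i = true ∧ Z a i + k + 1 ≤ h then 1 else 0) := by
  rw [diagOf]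
  rw [if_pos hk, Finset.card_filter]
  rfl

lemma cshift_zero {n : ℕ} (a : Fin (n + 1) → Bool) :
    cshift n a 0 = ! a (Fin.last n) := by simp [cshift]

lemma cshift_succ {n : ℕ} (a : Fin (n + 1) → Bool) (j : Fin n) :
    cshift n a j.succ = a j.castSucc := by
  have : ((j.succ : Fin (n+1)) : ℕ) = (j : ℕ) + 1 := rfl
  simp only [cshift, this]
  rw [if_neg (by omega)]
  congr 1

lemma Z_last {n h : ℕ} (a : Fin (n + 1) → Bool)
    (hz : (Finset.univ.filter (fun i => a i = false)).card = h) :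
    Z a (Fin.last n) = h := by
  rw [← hz, Z]
  congr 1
  ext i
  simp [Fin.le_last]

lemma Z_cshift_zero {n : ℕ} (a : Fin (n + 1) → Bool) :
    Z (cshift n a) 0 = if a (Fin.last n) = true then 1 else 0 := by
  rw [Z_eq_sum, Fin.sum_univ_succ]
  have h2 : ∑ j : Fin n, (if (j.succ : Fin (n+1)) ≤ 0 ∧ cshift n a j.succ = false then 1 else 0) = 0 := by
    apply Finset.sum_eq_zero
    intro j _
    rw [if_neg]
    intro hc
    exact absurd hc.1 (by simp [Fin.le_def])
  rw [h2, cshift_zero]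
  cases hA : a (Fin.last n) <;> simp

lemma Z_cshift_succ {n : ℕ} (a : Fin (n + 1) → Bool) (j : Fin n) :
    Z (cshift n a) j.succ =
      Z a j.castSucc + (if a (Fin.last n) = true then 1 else 0) := by
  rw [Z_eq_sum, Z_eq_sum, Fin.sum_univ_succ,
    Fin.sum_univ_castSucc (f := fun i : Fin (n+1) => if i ≤ j.castSucc ∧ a i = false then 1 else 0)]
  have hlast : ¬ ((Fin.last n) ≤ j.castSucc) := by
    simp [Fin.le_def]
  rw [if_neg (show ¬(Fin.last n ≤ j.castSucc ∧ a (Fin.last n) = false) from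
    fun hc => hlast hc.1)]
  have hterm : ∀ i : Fin n,
      (if (i.succ : Fin (n+1)) ≤ j.succ ∧ cshift n a i.succ = false then 1 else 0)
        = (if i.castSucc ≤ j.castSucc ∧ a i.castSucc = false then 1 else 0) := by
    intro i
    rw [cshift_succ]
    apply if_congr _ rfl rfl
    apply and_congr_left'
    rw [Fin.succ_le_succ_iff, Fin.castSucc_le_castSucc_iff]
  rw [Finset.sum_congr rfl (fun i _ => hterm i)]
  have h0 : ((0 : Fin (n+1)) ≤ j.succ) := Fin.zero_le _
  rw [cshift_zero]
  cases hA : a (Fin.last n) <;> simp [h0] <;> omega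

lemma ones_card {n h w : ℕ} (hhw : h + w = n + 1) (a : Fin (n + 1) → Bool)
    (hz : (Finset.univ.filter (fun i => a i = false)).card = h) :
    (Finset.univ.filter (fun i => a i = true)).card = w := by
  have := Finset.card_filter_add_card_filter_not
    (s := (Finset.univ : Finset (Fin (n+1)))) (p := fun i => a i = true)
  simp only [Finset.card_univ, Fintype.card_fin] at this
  have heq : (Finset.univ.filter (fun i : Fin (n+1) => ¬ a i = true)).card
      = (Finset.univ.filter (fun i : Fin (n+1) => a i = false)).card := by
    congr 1
    ext i
    simp
  rw [heq, hz] at this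
  omega

lemma Z_lt_of_true {n h : ℕ} (a : Fin (n + 1) → Bool)
    (hz : (Finset.univ.filter (fun i => a i = false)).card = h)
    (hlast : a (Fin.last n) = false) (i : Fin (n+1)) (hi : a i = true) :
    Z a i < h := by
  rw [← Z_last a hz]
  apply Finset.card_lt_card
  constructor
  · intro j hj
    simp only [Finset.mem_filter] at hj ⊢
    exact ⟨hj.1, Fin.le_last j, hj.2.2⟩
  · intro hsub
    have hmem : Fin.last n ∈ Finset.univ.filter
        (fun j : Fin (n+1) => j ≤ Fin.last n ∧ a j = false) := by
      simp [hlast]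
    have := hsub hmem
    simp only [Finset.mem_filter] at this
    have hil : i = Fin.last n := le_antisymm (Fin.le_last i) this.2.1
    rw [hil, hlast] at hi
    exact absurd hi (by simp)

/-- If the last entry is a zero, then `λ₁ = w`. -/
lemma lam1_eq_w {n h w : ℕ} (hhw : h + w = n + 1) (a : Fin (n + 1) → Bool)
    (hz : (Finset.univ.filter (fun i => a i = false)).card = h)
    (hlast : a (Fin.last n) = false) :
    diagOf h a 0 = w := by
  have hh : 0 < h := by
    rw [← hz]
    apply Finset.card_pos.mpr
    exact ⟨Fin.last n, by simp [hlast]⟩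
  rw [diagOf_eq_sum hh]
  rw [← ones_card hhw a hz, Finset.card_filter]
  apply Finset.sum_congr rfl
  intro i _
  apply if_congr _ rfl rfl
  constructor
  · exact fun h => h.1
  · intro hi
    refine ⟨hi, ?_⟩
    have := Z_lt_of_true a hz hlast i hi
    omega

/-- If the last entry is a one, then `λ₁ < w`. -/
lemma lam1_lt_w {n h w : ℕ} (hhw : h + w = n + 1) (a : Fin (n + 1) → Bool)
    (hz : (Finset.univ.filter (fun i => a i = false)).card = h)
    (hlast : a (Fin.last n) = true) :
    diagOf h a 0 < w := by
  have hw : 0 < w := by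
    rw [← ones_card hhw a hz]
    apply Finset.card_pos.mpr
    exact ⟨Fin.last n, by simp [hlast]⟩
  by_cases hh : 0 < h
  · rw [diagOf_eq_sum hh, ← ones_card hhw a hz, Finset.card_filter]
    apply Finset.sum_lt_sum
    · intro i _
      by_cases hc : a i = true ∧ Z a i + 0 + 1 ≤ h
      · rw [if_pos hc, if_pos hc.1]
      · rw [if_neg hc]
        split <;> omega
    · refine ⟨Fin.last n, Finset.mem_univ _, ?_⟩
      rw [if_pos hlast, if_neg]
      · norm_num
      · intro hc
        have := Z_last a hz
        omega
  · simp only [diagOf, if_neg (by omega : ¬ (0 : ℕ) < h)]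
    omega

end CshiftAux

/-- Under the bijection between binary sequences of length `n+1` and `⨆_{h+w=n+1} Y_{h,w}`,
the cyclic generator corresponds to `λ ↦ (λ_1,…,λ_h,0) ∈ Y_{h+1,w−1}` when `λ_1 < w`
(the appended zero being invisible in our `ℕ → ℕ` encoding), and to
`λ ↦ (λ_2+1, …, λ_h+1) ∈ Y_{h−1,w+1}` when `λ_1 = w`. -/
theorem cshift_on_diagrams (n h w : ℕ) (hn : 0 < n) (hhw : h + w = n + 1)
    (a : Fin (n + 1) → Bool)
    (hz : (Finset.univ.filter (fun i => a i = false)).card = h) :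
    (diagOf h a 0 < w → diagOf (h + 1) (cshift n a) = diagOf h a) ∧
    (diagOf h a 0 = w →
      diagOf (h - 1) (cshift n a) =
        fun k => if k + 1 < h then diagOf h a (k + 1) + 1 else 0) := by
  open CshiftAux in
  constructor
  · intro hlt
    have hlast : a (Fin.last n) = true := by
      cases hA : a (Fin.last n) with
      | false => exact absurd (lam1_eq_w hhw a hz hA) (by omega)
      | true => rfl
    have hb0 : cshift n a 0 = false := by
      rw [cshift_zero, hlast]; rfl
    funext k
    by_cases hk : k < h
    · rw [diagOf_eq_sum (show k < h + 1 by omega), diagOf_eq_sum hk,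
        Fin.sum_univ_succ,
        Fin.sum_univ_castSucc
          (f := fun i : Fin (n+1) => if a i = true ∧ Z a i + k + 1 ≤ h then 1 else 0)]
      have hZl := Z_last a hz
      rw [if_neg (show ¬(a (Fin.last n) = true ∧ Z a (Fin.last n) + k + 1 ≤ h) from
        fun hc => by omega)]
      rw [if_neg (show ¬(cshift n a 0 = true ∧ Z (cshift n a) 0 + k + 1 ≤ h + 1) from
        fun hc => by rw [hb0] at hc; exact absurd hc.1 (by simp))]
      rw [zero_add, add_zero]
      apply Finset.sum_congr rfl
      intro j _
      rw [cshift_succ, Z_cshift_succ, if_pos hlast]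
      exact if_congr (and_congr_right fun _ => by omega) rfl rfl
    · by_cases hk1 : k < h + 1
      · rw [diagOf_eq_sum hk1, diagOf, if_neg hk]
        apply Finset.sum_eq_zero
        intro j _
        rw [if_neg]
        intro hc
        have hZ1 : 1 ≤ Z (cshift n a) j := by
          rw [Z]
          apply Finset.card_pos.mpr
          exact ⟨0, by simp [hb0, Fin.zero_le]⟩
        omega
      · simp only [diagOf]
        rw [if_neg hk1, if_neg hk]
  · intro heqw
    have hlast : a (Fin.last n) = false := by
      cases hA : a (Fin.last n) with
      | false => rfl
      | true => exact absurd heqw (by have := lam1_lt_w hhw a hz hA; omega)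
    have hh : 0 < h := by
      rw [← hz]
      apply Finset.card_pos.mpr
      exact ⟨Fin.last n, by simp [hlast]⟩
    have hb0 : cshift n a 0 = true := by
      rw [cshift_zero, hlast]; rfl
    have hnl : ¬ a (Fin.last n) = true := by simp [hlast]
    funext k
    show diagOf (h - 1) (cshift n a) k = if k + 1 < h then diagOf h a (k + 1) + 1 else 0
    by_cases hk : k < h - 1
    · rw [if_pos (show k + 1 < h by omega), diagOf_eq_sum hk,
        diagOf_eq_sum (show k + 1 < h by omega),
        Fin.sum_univ_succ,
        Fin.sum_univ_castSucc
          (f := fun i : Fin (n+1) => if a i = true ∧ Z a i + (k + 1) + 1 ≤ h then 1 else 0)]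
      have hzb0 : Z (cshift n a) 0 = 0 := by
        rw [Z_cshift_zero, if_neg hnl]
      rw [if_pos (show cshift n a 0 = true ∧ Z (cshift n a) 0 + k + 1 ≤ h - 1 from
        ⟨hb0, by rw [hzb0]; omega⟩)]
      rw [if_neg (show ¬(a (Fin.last n) = true ∧ Z a (Fin.last n) + (k + 1) + 1 ≤ h) from
        fun hc => hnl hc.1)]
      rw [add_zero]
      have hsum : ∀ j : Fin n,
          (if cshift n a j.succ = true ∧ Z (cshift n a) j.succ + k + 1 ≤ h - 1 then 1 else 0)
            = (if a j.castSucc = true ∧ Z a j.castSucc + (k + 1) + 1 ≤ h then 1 else 0) := by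
        intro j
        rw [cshift_succ, Z_cshift_succ, if_neg hnl, add_zero]
        exact if_congr (and_congr_right fun _ => by omega) rfl rfl
      rw [Finset.sum_congr rfl (fun j _ => hsum j)]
      omega
    · rw [if_neg (show ¬ (k + 1 < h) by omega), diagOf, if_neg hk]
end

section
/- With λ ∈ Y_{h,w}, λ_1 = w, and λ^{(i)} defined as in the staircase construction, the transpose satisfies (λ^{(i)})^T = (α_1, α_2, …, α_{w−i}, α_{w−i+2} − 1, …, α_w − 1, 0), where α = λ^T; consequently ν_i := |λ| − |λ^{(i)}| = α_{w−i+1} + (i − 1). -/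
/-- `Yset h w`: Young diagrams with at most `h` rows of length at most `w`. -/
def Yset (h w : ℕ) : Set (ℕ → ℕ) :=
  {lam | (∀ i j : ℕ, i ≤ j → lam j ≤ lam i) ∧ (∀ i, lam i ≤ w) ∧ ∀ i, h ≤ i → lam i = 0}

/-- Transpose of a diagram with at most `h` rows: `(λ^T)_i = #{j < h : λ_j ≥ i+1}` (0-based). -/
def transposeIn (h : ℕ) (lam : ℕ → ℕ) : ℕ → ℕ :=
  fun i => ((Finset.range h).filter (fun j => i + 1 ≤ lam j)).card

/-- The staircase truncation `λ^{(i)}` (0-based encoding). -/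
def stair (h w i : ℕ) (lam : ℕ → ℕ) : ℕ → ℕ :=
  fun k =>
    if k + 1 < ((Finset.range h).filter (fun t => w - i < lam t)).card then lam (k + 1) - 1
    else if k + 1 = ((Finset.range h).filter (fun t => w - i < lam t)).card then w - i
    else lam k

open Finset

/-!
Let `J = α_{w-i}`; since `λ` is antitone, the rows with `λ_j > w - i` are exactly `j < J`.
`λ^{(i)}` deletes the first row, moves rows `1, …, J-1` up while shortening each by one cell,
puts a row of length `w - i` in position `J - 1`, and leaves the rows from `J` on untouched.
Hence the columns `k < w - i` do not change, and for `k ≥ w - i` a cell `(j, k)` lies in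
`λ^{(i)}` iff `(j + 1, k + 1)` lies in `λ`, so column `k` of `λ^{(i)}` is column `k + 1` of `λ`
without its top cell. The cells removed are `w - (w - i) = i` from the first row and one from
each of the `J - 1` shifted rows.
-/

lemma Finset.eq_range_card_of_forall_le_mem {S : Finset ℕ} (hS : ∀ a ∈ S, ∀ b ≤ a, b ∈ S) :
    S = range #S := by
  refine eq_of_subset_of_card_le (fun a ha => mem_range.2 ?_) (card_range _).le
  have : range (a + 1) ⊆ S := fun b hb => hS a ha b (Nat.lt_succ_iff.1 (mem_range.1 hb))
  simpa using card_le_card this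

section Transpose

variable {h : ℕ} {lam : ℕ → ℕ}

lemma lt_transposeIn_iff (hanti : Antitone lam) (hvan : lam h = 0) {j k : ℕ} :
    j < transposeIn h lam k ↔ k < lam j := by
  set S := (range h).filter (fun j => k + 1 ≤ lam j)
  have hS : S = range #S := eq_range_card_of_forall_le_mem fun a ha b hab => by
    simp only [S, mem_filter, mem_range] at ha ⊢
    exact ⟨by omega, ha.2.trans (hanti hab)⟩
  have hjh : k < lam j → j < h := fun hkj =>
    lt_of_not_ge fun hhj => by have := hanti hhj; omega
  rw [transposeIn, ← mem_range, ← hS]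
  simp only [S, mem_filter, mem_range]
  exact ⟨fun hj => hj.2, fun hkj => ⟨hjh hkj, hkj⟩⟩

lemma transposeIn_congr {mu nu : ℕ → ℕ} {k l : ℕ} (H : ∀ j < h, k < mu j ↔ l < nu j) :
    transposeIn h mu k = transposeIn h nu l := by
  unfold transposeIn
  congr 1
  exact filter_congr fun j hj => H j (mem_range.1 hj)

lemma transposeIn_shift (hanti : Antitone lam) (hvan : lam h = 0) (k : ℕ) :
    transposeIn h (fun j => lam (j + 1)) k = transposeIn h lam k - 1 := by
  have hanti' : Antitone fun j => lam (j + 1) := fun a b hab => hanti (by omega)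
  have hvan' : lam (h + 1) = 0 := Nat.eq_zero_of_le_zero (hvan ▸ hanti h.le_succ)
  refine eq_of_forall_lt_iff fun j => ?_
  rw [lt_transposeIn_iff hanti' hvan', Nat.lt_sub_iff_add_lt, lt_transposeIn_iff hanti hvan]

lemma transposeIn_eq_zero (hanti : Antitone lam) (hvan : lam h = 0) {k : ℕ} (hk : lam 0 ≤ k) :
    transposeIn h lam k = 0 :=
  Nat.eq_zero_of_not_pos fun hpos => (lt_transposeIn_iff hanti hvan).1 hpos |>.not_ge hk

end Transpose

section Stair

variable {h w i : ℕ} {lam : ℕ → ℕ} {j k : ℕ}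

lemma stair_apply : stair h w i lam j =
    if j + 1 < transposeIn h lam (w - i) then lam (j + 1) - 1
    else if j + 1 = transposeIn h lam (w - i) then w - i
    else lam j :=
  rfl

lemma stair_of_succ_lt (hj : j + 1 < transposeIn h lam (w - i)) :
    stair h w i lam j = lam (j + 1) - 1 := by
  rw [stair_apply, if_pos hj]

lemma stair_of_succ_eq (hj : j + 1 = transposeIn h lam (w - i)) : stair h w i lam j = w - i := by
  rw [stair_apply, if_neg hj.not_lt, if_pos hj]

lemma stair_of_le (hj : transposeIn h lam (w - i) ≤ j) : stair h w i lam j = lam j := by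
  rw [stair_apply, if_neg (by omega), if_neg (by omega)]

variable (hanti : Antitone lam) (hvan : lam h = 0)
include hanti hvan

lemma lt_stair_iff_of_lt (hk : k < w - i) : k < stair h w i lam j ↔ k < lam j := by
  have hJ (j : ℕ) : j < transposeIn h lam (w - i) ↔ w - i < lam j := lt_transposeIn_iff hanti hvan
  rcases lt_trichotomy (j + 1) (transposeIn h lam (w - i)) with hj | hj | hj
  · have := (hJ _).1 hj
    have := hanti (Nat.le_add_right j 1)
    rw [stair_of_succ_lt hj]
    omega
  · have := (hJ j).1 (by omega)
    rw [stair_of_succ_eq hj]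
    omega
  · rw [stair_of_le (by omega)]

lemma lt_stair_iff_of_le (hk : w - i ≤ k) : k < stair h w i lam j ↔ k + 1 < lam (j + 1) := by
  have hJ (j : ℕ) : j < transposeIn h lam (w - i) ↔ w - i < lam j := lt_transposeIn_iff hanti hvan
  rcases lt_trichotomy (j + 1) (transposeIn h lam (w - i)) with hj | hj | hj
  · have := (hJ _).1 hj
    rw [stair_of_succ_lt hj]
    omega
  · have := (hJ (j + 1)).not.1 (by omega)
    rw [stair_of_succ_eq hj]
    omega
  · have := (hJ j).not.1 (by omega)
    have := hanti (Nat.le_add_right j 1)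
    rw [stair_of_le (by omega)]
    omega

lemma transposeIn_stair_of_lt (hk : k < w - i) :
    transposeIn h (stair h w i lam) k = transposeIn h lam k :=
  transposeIn_congr fun _ _ => lt_stair_iff_of_lt hanti hvan hk

lemma transposeIn_stair_of_le (hk : w - i ≤ k) :
    transposeIn h (stair h w i lam) k = transposeIn h lam (k + 1) - 1 := by
  rw [← transposeIn_shift hanti hvan]
  exact transposeIn_congr fun _ _ => lt_stair_iff_of_le hanti hvan hk

lemma sum_sub_sum_stair (h0 : w - i < lam 0) :
    ∑ k ∈ range h, lam k - ∑ k ∈ range h, stair h w i lam k =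
      transposeIn h lam (w - i) + (lam 0 - (w - i) - 1) := by
  have hJ (j : ℕ) : j < transposeIn h lam (w - i) ↔ w - i < lam j := lt_transposeIn_iff hanti hvan
  set J := transposeIn h lam (w - i)
  obtain ⟨n, hn⟩ : ∃ n, J = n + 1 := Nat.exists_eq_add_one.2 ((hJ 0).2 h0)
  have hJh : J ≤ h := (card_filter_le _ _).trans_eq (card_range h)
  have htail : ∑ k ∈ Ico J h, stair h w i lam k = ∑ k ∈ Ico J h, lam k :=
    sum_congr rfl fun k hk => stair_of_le (mem_Ico.1 hk).1
  have hhead : ∑ k ∈ range n, lam (k + 1) = ∑ k ∈ range n, stair h w i lam k + n := by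
    calc ∑ k ∈ range n, lam (k + 1) = ∑ k ∈ range n, (stair h w i lam k + 1) :=
          sum_congr rfl fun k hk => by
            have hk : k + 1 < J := by rw [hn]; simpa using hk
            have := (hJ _).1 hk
            rw [stair_of_succ_lt hk]
            omega
      _ = ∑ k ∈ range n, stair h w i lam k + n := by simp [sum_add_distrib]
  rw [← sum_range_add_sum_Ico _ hJh, ← sum_range_add_sum_Ico _ hJh, htail, hn,
    sum_range_succ (stair h w i lam), sum_range_succ' lam, hhead, stair_of_succ_eq hn.symm]
  omega

end Stair

theorem stair_transpose_general (h w i : ℕ) (hi : 0 < i) (hiw : i ≤ w)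
    (lam : ℕ → ℕ) (hlam : lam ∈ Yset h w) (hl0 : lam 0 = w) :
    (∀ k, transposeIn h (stair h w i lam) k =
      if k < w - i then transposeIn h lam k
      else if k + 1 < w then transposeIn h lam (k + 1) - 1
      else 0) ∧
    (∑ k ∈ Finset.range h, lam k) - (∑ k ∈ Finset.range h, stair h w i lam k)
      = transposeIn h lam (w - i) + (i - 1) := by
  have hanti : Antitone lam := hlam.1
  have hvan : lam h = 0 := hlam.2.2 h le_rfl
  refine ⟨fun k => ?_, ?_⟩
  · split_ifs with hk hkw
    · exact transposeIn_stair_of_lt hanti hvan hk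
    · exact transposeIn_stair_of_le hanti hvan (not_lt.1 hk)
    · rw [transposeIn_stair_of_le hanti hvan (not_lt.1 hk),
        transposeIn_eq_zero hanti hvan (by omega)]
  · rw [sum_sub_sum_stair hanti hvan (by omega), hl0]
    omega

/-- For `λ ∈ Y_{h,w}` with `λ_1 = w` and `0 < i ≤ w`, writing `α = λ^T`, the transpose of the
staircase truncation is `(λ^{(i)})^T = (α_1, …, α_{w−i}, α_{w−i+2} − 1, …, α_w − 1, 0)`;
consequently `ν_i = |λ| − |λ^{(i)}| = α_{w−i+1} + (i − 1)`  (all indices 1-based in this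
description, 0-based in the formal statement). -/
theorem stair_transpose (h w i : ℕ) (hh : 0 < h) (hw : 0 < w) (hi : 0 < i) (hiw : i ≤ w)
    (lam : ℕ → ℕ) (hlam : lam ∈ Yset h w) (hl0 : lam 0 = w) :
    (∀ k, transposeIn h (stair h w i lam) k =
      if k < w - i then transposeIn h lam k
      else if k + 1 < w then transposeIn h lam (k + 1) - 1
      else 0) ∧
    (∑ k ∈ Finset.range h, lam k) - (∑ k ∈ Finset.range h, stair h w i lam k)
      = transposeIn h lam (w - i) + (i - 1) :=
  stair_transpose_general h w i hi hiw lam hlam hl0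
end

section
/- Let n ≥ 1, 0 < w ≤ n, ρ = (n, …, 1), and let ν = (ν_1 ≥ ⋯ ≥ ν_w) be a weakly decreasing integer sequence with ν_w ≥ −(2n − 2w + 1). Form the length-n sequence τ = (n+ν_1, n−1+ν_2, …, n−w+1+ν_w, n−w, n−w−1, …, 1). Then: if ν_w ≥ 0, all entries of τ are distinct positive integers; if −(2n−2w+1) ≤ ν_w < 0, then either some entry of τ is zero or two entries of τ have equal absolute value. -/
/-- Combinatorics of Borel–Bott–Weil vanishing on isotropic Grassmannians `IGr(w, 2n)`
(Lemma A.3): for `0 < w ≤ n` and `ν` weakly decreasing of length `w` with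
`ν_w ≥ −(2n − 2w + 1)`, the sequence
`τ = (n+ν_1, …, n−w+1+ν_w, n−w, …, 1)` has pairwise distinct positive entries if `ν_w ≥ 0`,
while if `ν_w < 0` then some entry is zero or two entries have equal absolute value. -/
theorem bbw_isotropic (n w : ℕ) (hw : 0 < w) (hwn : w ≤ n) (nu : ℕ → ℤ)
    (hanti : ∀ i j : ℕ, i ≤ j → j < w → nu j ≤ nu i)
    (hlast : -(2 * (n : ℤ) - 2 * (w : ℤ) + 1) ≤ nu (w - 1))
    (tau : Fin n → ℤ)
    (htau : ∀ m : Fin n, tau m =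
      if (m : ℕ) < w then ((n : ℤ) - (m : ℕ)) + nu (m : ℕ) else ((n : ℤ) - (m : ℕ))) :
    (0 ≤ nu (w - 1) → (∀ m, 0 < tau m) ∧ Function.Injective tau) ∧
    (nu (w - 1) < 0 →
      (∃ m, tau m = 0) ∨ ∃ i j : Fin n, i ≠ j ∧ |tau i| = |tau j|) := by
  constructor
  · intro hpos
    have key : ∀ i : Fin n, (i : ℕ) < w → 0 ≤ nu (i : ℕ) := by
      intro i hi
      exact le_trans hpos (hanti (i : ℕ) (w - 1) (by omega) (by omega))
    have hposall : ∀ m : Fin n, 0 < tau m := by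
      intro m
      rw [htau]
      have hm : (m : ℕ) < n := m.2
      split_ifs with h
      · have := key m h; omega
      · omega
    refine ⟨hposall, ?_⟩
    have hmono : ∀ i j : Fin n, (i : ℕ) < (j : ℕ) → tau j < tau i := by
      intro i j hij
      rw [htau i, htau j]
      have hi : (i : ℕ) < n := i.2
      have hj : (j : ℕ) < n := j.2
      split_ifs with h1 h2 h2
      · have := hanti (i : ℕ) (j : ℕ) (le_of_lt hij) h1
        omega
      · omega
      · have := key i h2; omega
      · omega
    intro i j hij
    by_contra hne
    rcases lt_or_gt_of_ne (fun h : (i : ℕ) = (j : ℕ) => hne (Fin.ext h)) with h | h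
    · have := hmono i j h; omega
    · have := hmono j i h; omega
  · intro hneg
    have hwn1 : w - 1 < n := by omega
    set m0 : Fin n := ⟨w - 1, hwn1⟩ with hm0
    have ht : tau m0 = (n : ℤ) - ((w : ℤ) - 1) + nu (w - 1) := by
      rw [htau]
      have : (m0 : ℕ) < w := by simp [hm0]; omega
      rw [if_pos this]
      have : ((w - 1 : ℕ) : ℤ) = (w : ℤ) - 1 := by omega
      simp [hm0, this]
    have h1 : -((n : ℤ) - w) ≤ tau m0 := by
      have : (w : ℤ) ≤ (n : ℤ) := by exact_mod_cast hwn
      omega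
    have h2 : tau m0 ≤ (n : ℤ) - w := by omega
    by_cases h0 : tau m0 = 0
    · exact Or.inl ⟨m0, h0⟩
    · right
      have habs : ((tau m0).natAbs : ℤ) = |tau m0| := (Int.abs_eq_natAbs _).symm
      have hna1 : 1 ≤ (tau m0).natAbs := by omega
      have hna2 : ((tau m0).natAbs : ℤ) ≤ (n : ℤ) - w := by
        rw [habs]; rw [abs_le]; exact ⟨h1, h2⟩
      have hkw : w ≤ n - (tau m0).natAbs := by omega
      have hkn : n - (tau m0).natAbs < n := by omega
      refine ⟨m0, ⟨n - (tau m0).natAbs, hkn⟩, ?_, ?_⟩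
      · intro h
        have hv : (m0 : ℕ) = n - (tau m0).natAbs := congrArg Fin.val h
        have hv2 : (m0 : ℕ) = w - 1 := rfl
        omega
      · have hτ : tau ⟨n - (tau m0).natAbs, hkn⟩ = ((tau m0).natAbs : ℤ) := by
          rw [htau]
          rw [if_neg (by simp; omega)]
          have : ((n - (tau m0).natAbs : ℕ) : ℤ) = (n : ℤ) - (tau m0).natAbs := by
            omega
          rw [this]; ring
        rw [hτ, habs, abs_abs]
end

section
/- Let λ ∈ Y_{h,w} with λ_1 = w where h + w = n + 1, let bar-λ = (λ_2, …, λ_h), and let μ ∈ Y_{w,h}. Consider τ = ρ + (−μ(−1), bar-λ) = (n+1−μ_w, n−μ_{w−1}, …, h+1−μ_1, h−1+λ_2, …, 2+λ_{h−1}, 1+λ_h), a sequence of length n. Then all entries of τ are positive integers at most n+1, and τ has pairwise distinct entries if and only if μ^T = λ^{(i)} for some i ∈ {0, 1, …, w}, where λ^{(0)} = λ and λ^{(i)} for i ≥ 1 is the staircase truncation of λ. -/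
lemma count_lt_iff {N t : ℕ} (p : ℕ → Prop) [DecidablePred p]
    (hp : ∀ i j : ℕ, i ≤ j → p j → p i) :
    t < ((Finset.range N).filter p).card ↔ t < N ∧ p t := by
  constructor
  · intro ht
    rcases Nat.lt_or_ge t N with hN | hN
    · refine ⟨hN, ?_⟩
      by_contra hpt
      have hsub : (Finset.range N).filter p ⊆ Finset.range t := by
        intro s hs
        simp only [Finset.mem_filter, Finset.mem_range] at hs ⊢
        by_contra hst
        exact hpt (hp t s (by omega) hs.2)
      have := Finset.card_le_card hsub
      simp only [Finset.card_range] at this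
      omega
    · have := Finset.card_le_card (Finset.filter_subset p (Finset.range N))
      simp only [Finset.card_range] at this
      omega
  · rintro ⟨htN, hpt⟩
    have hsub : Finset.range (t + 1) ⊆ (Finset.range N).filter p := by
      intro s hs
      simp only [Finset.mem_range] at hs
      simp only [Finset.mem_filter, Finset.mem_range]
      exact ⟨by omega, hp s t (by omega) hpt⟩
    have := Finset.card_le_card hsub
    simp only [Finset.card_range] at this
    omega

lemma transpose_lt_iff (w : ℕ) (mu : ℕ → ℕ) (hm : ∀ i j : ℕ, i ≤ j → mu j ≤ mu i)
    (j t : ℕ) : j < transposeIn w mu t ↔ j < w ∧ t + 1 ≤ mu j := by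
  exact count_lt_iff (fun s => t + 1 ≤ mu s) (fun i j hij hj => le_trans hj (hm i j hij))

lemma transpose_antitone (w : ℕ) (mu : ℕ → ℕ) (hm : ∀ i j : ℕ, i ≤ j → mu j ≤ mu i)
    (s t : ℕ) (hst : s ≤ t) : transposeIn w mu t ≤ transposeIn w mu s := by
  by_contra hcon
  push_neg at hcon
  have h1 := (transpose_lt_iff w mu hm (transposeIn w mu s) t).mp hcon
  have h2 := (transpose_lt_iff w mu hm (transposeIn w mu s) s).mpr ⟨h1.1, by omega⟩
  omega

lemma transpose_le (w : ℕ) (mu : ℕ → ℕ) (t : ℕ) : transposeIn w mu t ≤ w := by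
  have := Finset.card_le_card (Finset.filter_subset (fun j => t + 1 ≤ mu j) (Finset.range w))
  simpa [transposeIn] using this

lemma transpose_eq_zero (w h : ℕ) (mu : ℕ → ℕ) (hmh : ∀ j, mu j ≤ h) (t : ℕ) (ht : h ≤ t) :
    transposeIn w mu t = 0 := by
  unfold transposeIn
  rw [Finset.card_eq_zero, Finset.filter_eq_empty_iff]
  intro j _
  have := hmh j
  omega

lemma stair_zero (h w : ℕ) (lam : ℕ → ℕ) (hlw : ∀ t, lam t ≤ w) :
    stair h w 0 lam = lam := by
  funext k
  have hJ : ((Finset.range h).filter (fun t => w - 0 < lam t)) = ∅ := by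
    rw [Finset.filter_eq_empty_iff]
    intro t _
    have := hlw t
    omega
  simp only [stair]
  rw [hJ]
  simp

def aF (h : ℕ) (mu : ℕ → ℕ) : ℕ → ℤ := fun j => (h : ℤ) + 1 + j - mu j
def bF (h : ℕ) (lam : ℕ → ℕ) : ℕ → ℤ := fun k => (h : ℤ) - k + lam k
def cF (h w : ℕ) (mu : ℕ → ℕ) : ℕ → ℤ := fun t => (transposeIn w mu t : ℤ) + h - t

lemma step4 (h w : ℕ) (hh : 0 < h) (hw : 0 < w)
    (lam : ℕ → ℕ) (hlmono : ∀ i j : ℕ, i ≤ j → lam j ≤ lam i)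
    (hlw : ∀ i, lam i ≤ w) (hlz : ∀ i, h ≤ i → lam i = 0) (hl0 : lam 0 = w)
    (mu : ℕ → ℕ) (hmmono : ∀ i j : ℕ, i ≤ j → mu j ≤ mu i) (hmh : ∀ i, mu i ≤ h) :
    (∀ k, 1 ≤ k → k ≤ h - 1 → ∃ t, t < h ∧ bF h lam k = cF h w mu t) ↔
      ∃ i ≤ w, transposeIn w mu = if i = 0 then lam else stair h w i lam := by
  have hνanti : ∀ s t : ℕ, s ≤ t → transposeIn w mu t ≤ transposeIn w mu s :=
    transpose_antitone w mu hmmono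
  have hνle : ∀ t, transposeIn w mu t ≤ w := transpose_le w mu
  have hνz : ∀ t, h ≤ t → transposeIn w mu t = 0 := transpose_eq_zero w h mu hmh
  have hbstrict : ∀ k k' : ℕ, k < k' → bF h lam k' < bF h lam k := by
    intro k k' hk
    have := hlmono k k' (le_of_lt hk)
    simp only [bF]
    omega
  have hcstrict : ∀ s t : ℕ, s < t → cF h w mu t < cF h w mu s := by
    intro s t hst
    have := hνanti s t (le_of_lt hst)
    simp only [cF]
    omega
  have hbinj : Function.Injective (bF h lam) := by
    intro x y hxy
    rcases lt_trichotomy x y with hc | hc | hc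
    · exact absurd hxy.symm (ne_of_lt (hbstrict x y hc))
    · exact hc
    · exact absurd hxy (ne_of_lt (hbstrict y x hc))
  constructor
  · -- forward: B ⊆ C implies existence of i
    intro H
    have hpoint : ∀ k, 1 ≤ k → k ≤ h - 1 →
        bF h lam k = cF h w mu (k - 1) ∨ bF h lam k = cF h w mu k := by
      intro k hk1 hk2
      obtain ⟨t, ht, heq⟩ := H k hk1 hk2
      have ht1 : k - 1 ≤ t := by
        have hsub : (Finset.Icc 1 (k - 1)).image (bF h lam) ⊆
            (Finset.range t).image (cF h w mu) := by
          intro v hv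
          simp only [Finset.mem_image, Finset.mem_Icc] at hv
          obtain ⟨m, ⟨hm1, hm2⟩, rfl⟩ := hv
          obtain ⟨s, hs, hbs⟩ := H m hm1 (by omega)
          have hlt : cF h w mu t < cF h w mu s := by
            rw [← heq, ← hbs]
            exact hbstrict m k (by omega)
          have hst : s < t := by
            by_contra hcon
            push_neg at hcon
            rcases eq_or_lt_of_le hcon with rfl | h'
            · exact absurd hlt (lt_irrefl _)
            · have := hcstrict t s h'
              omega
          simp only [Finset.mem_image, Finset.mem_range]
          exact ⟨s, hst, hbs.symm⟩
        have h1 := Finset.card_le_card hsub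
        rw [Finset.card_image_of_injective _ hbinj, Nat.card_Icc] at h1
        have h2 := Finset.card_image_le (f := cF h w mu) (s := Finset.range t)
        rw [Finset.card_range] at h2
        omega
      have ht2 : t ≤ k := by
        have hsub : (Finset.Icc (k + 1) (h - 1)).image (bF h lam) ⊆
            (Finset.Icc (t + 1) (h - 1)).image (cF h w mu) := by
          intro v hv
          simp only [Finset.mem_image, Finset.mem_Icc] at hv
          obtain ⟨m, ⟨hm1, hm2⟩, rfl⟩ := hv
          obtain ⟨s, hs, hbs⟩ := H m (by omega) hm2
          have hlt : cF h w mu s < cF h w mu t := by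
            rw [← heq, ← hbs]
            exact hbstrict k m (by omega)
          have hst : t < s := by
            by_contra hcon
            push_neg at hcon
            rcases eq_or_lt_of_le hcon with rfl | h'
            · exact absurd hlt (lt_irrefl _)
            · have := hcstrict s t h'
              omega
          simp only [Finset.mem_image, Finset.mem_Icc]
          exact ⟨s, ⟨by omega, by omega⟩, hbs.symm⟩
        have h1 := Finset.card_le_card hsub
        rw [Finset.card_image_of_injective _ hbinj, Nat.card_Icc] at h1
        have h2 := Finset.card_image_le (f := cF h w mu) (s := Finset.Icc (t + 1) (h - 1))
        rw [Nat.card_Icc] at h2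
        omega
      have : t = k - 1 ∨ t = k := by omega
      rcases this with rfl | rfl
      · exact Or.inl heq
      · exact Or.inr heq
    -- structure: find p
    obtain ⟨p, hp_le, hB, hC⟩ :
        ∃ p, p ≤ h - 1 ∧ (∀ k, 1 ≤ k → k ≤ p → bF h lam k = cF h w mu (k - 1)) ∧
          (∀ k, p < k → k ≤ h - 1 → bF h lam k = cF h w mu k) := by
      by_cases hcond : ∃ k, 1 ≤ k ∧ k ≤ h - 1 ∧ bF h lam k = cF h w mu k
      · classical
        obtain ⟨hk01, hk02, hk0eq⟩ := Nat.find_spec hcond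
        set k0 := Nat.find hcond with hk0def
        refine ⟨k0 - 1, by omega, ?_, ?_⟩
        · intro k hk1 hkp
          have hne := Nat.find_min hcond (m := k) (by omega)
          rcases hpoint k hk1 (by omega) with hcase | hcase
          · exact hcase
          · exact absurd ⟨hk1, by omega, hcase⟩ hne
        · have key : ∀ k, k0 ≤ k → k ≤ h - 1 → bF h lam k = cF h w mu k := by
            intro k hk
            induction k, hk using Nat.le_induction with
            | base => intro _; exact hk0eq
            | succ m hm ih =>
              intro hm2
              have hbm : bF h lam m = cF h w mu m := ih (by omega)
              rcases hpoint (m + 1) (by omega) hm2 with hc | hc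
              · exfalso
                have hlt := hbstrict m (m + 1) (by omega)
                have e : m + 1 - 1 = m := by omega
                rw [e] at hc
                rw [hc, ← hbm] at hlt
                exact absurd hlt (lt_irrefl _)
              · exact hc
          intro k hkp hk2
          exact key k (by omega) hk2
      · refine ⟨h - 1, le_refl _, ?_, ?_⟩
        · intro k hk1 hkp
          rcases hpoint k hk1 hkp with hc | hc
          · exact hc
          · exact absurd ⟨k, hk1, hkp, hc⟩ hcond
        · intro k hkp hk2
          omega
    have hν1 : ∀ t, t < p → lam (t + 1) = transposeIn w mu t + 1 := by
      intro t ht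
      have hb := hB (t + 1) (by omega) (by omega)
      have e : t + 1 - 1 = t := by omega
      rw [e] at hb
      simp only [bF, cF] at hb
      omega
    have hν2 : ∀ k, p < k → k < h → transposeIn w mu k = lam k := by
      intro k h1 h2
      have hc := hC k h1 (by omega)
      simp only [bF, cF] at hc
      omega
    by_cases hνpw : transposeIn w mu p = w
    · have hp0 : p = 0 := by
        by_contra h0
        have h1 := hν1 (p - 1) (by omega)
        have h2 := hνanti (p - 1) p (by omega)
        have h3 := hlw (p - 1 + 1)
        omega
      refine ⟨0, by omega, ?_⟩
      rw [if_pos rfl]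
      funext k
      rcases Nat.eq_zero_or_pos k with rfl | hk
      · rw [hl0, ← hp0]
        exact hνpw
      · rcases Nat.lt_or_ge k h with hkh | hkh
        · exact hν2 k (by omega) hkh
        · rw [hνz k hkh, hlz k hkh]
    · have hνplt : transposeIn w mu p < w := lt_of_le_of_ne (hνle p) hνpw
      refine ⟨w - transposeIn w mu p, by omega, ?_⟩
      rw [if_neg (by omega)]
      have hwi : w - (w - transposeIn w mu p) = transposeIn w mu p := by
        have := hνle p
        omega
      have hJiff : ∀ t, (t < ((Finset.range h).filter
          (fun s => w - (w - transposeIn w mu p) < lam s)).card ↔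
          (t < h ∧ w - (w - transposeIn w mu p) < lam t)) := by
        intro t
        exact count_lt_iff _ (fun a b hab hb => lt_of_lt_of_le hb (hlmono a b hab))
      have hlampgt : transposeIn w mu p < lam p := by
        rcases Nat.eq_zero_or_pos p with rfl | hp1
        · rw [hl0]
          exact hνplt
        · have h1 := hν1 (p - 1) (by omega)
          have h2 := hνanti (p - 1) p (by omega)
          have e : p - 1 + 1 = p := by omega
          rw [e] at h1
          omega
      have hJ : ((Finset.range h).filter
          (fun s => w - (w - transposeIn w mu p) < lam s)).card = p + 1 := by
        have h1 := (hJiff p).mpr ⟨by omega, by rw [hwi]; exact hlampgt⟩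
        have h2 : ¬ (p + 1 < ((Finset.range h).filter
            (fun s => w - (w - transposeIn w mu p) < lam s)).card) := by
          intro hc
          have h3 := (hJiff (p + 1)).mp hc
          have h4 := hν2 (p + 1) (by omega) h3.1
          have h5 := hνanti p (p + 1) (by omega)
          rw [hwi] at h3
          omega
        omega
      funext k
      simp only [stair]
      rw [hJ]
      rcases lt_trichotomy k p with hkp | rfl | hkp
      · rw [if_pos (by omega)]
        have := hν1 k hkp
        omega
      · rw [if_neg (by omega), if_pos rfl, hwi]
      · rw [if_neg (by omega), if_neg (by omega)]
        rcases Nat.lt_or_ge k h with hkh | hkh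
        · exact hν2 k hkp hkh
        · rw [hνz k hkh, hlz k hkh]
  · -- backward
    rintro ⟨i, hi, hnu⟩ k hk1 hk2
    by_cases hi0 : i = 0
    · subst hi0
      rw [if_pos rfl] at hnu
      refine ⟨k, by omega, ?_⟩
      simp only [bF, cF, hnu]
      omega
    · rw [if_neg hi0] at hnu
      have hJiff : ∀ t, (t < ((Finset.range h).filter (fun s => w - i < lam s)).card ↔
          (t < h ∧ w - i < lam t)) := by
        intro t
        exact count_lt_iff _ (fun a b hab hb => lt_of_lt_of_le hb (hlmono a b hab))
      have hstair : ∀ m, stair h w i lam m =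
          if m + 1 < ((Finset.range h).filter (fun s => w - i < lam s)).card then lam (m + 1) - 1
          else if m + 1 = ((Finset.range h).filter (fun s => w - i < lam s)).card then w - i
          else lam m := fun m => rfl
      by_cases hkJ : k < ((Finset.range h).filter (fun s => w - i < lam s)).card
      · refine ⟨k - 1, by omega, ?_⟩
        have hlk : w - i < lam k := ((hJiff k).mp hkJ).2
        have hν : transposeIn w mu (k - 1) = lam k - 1 := by
          rw [hnu, hstair]
          have e : k - 1 + 1 = k := by omega
          rw [e, if_pos hkJ]
        simp only [bF, cF, hν]
        omega
      · refine ⟨k, by omega, ?_⟩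
        have hν : transposeIn w mu k = lam k := by
          rw [hnu, hstair, if_neg (by omega), if_neg (by omega)]
        simp only [bF, cF, hν]
        omega

/-- Regularity analysis of Proposition A.7: for `λ ∈ Y_{h,w}` with `λ_1 = w`, `h + w = n + 1`,
and `μ ∈ Y_{w,h}`, the weight
`τ = ρ + (−μ(−1), λ̄) = (n+1−μ_w, …, h+1−μ_1, h−1+λ_2, …, 1+λ_h)` has all entries positive
integers at most `n+1`, and has pairwise distinct entries if and only if `μ^T = λ^{(i)}` for
some `i ∈ {0, …, w}` (with `λ^{(0)} = λ`). -/
theorem regularity_main (n h w : ℕ) (hh : 0 < h) (hw : 0 < w) (hhw : h + w = n + 1)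
    (lam : ℕ → ℕ) (hlam : lam ∈ Yset h w) (hl0 : lam 0 = w)
    (mu : ℕ → ℕ) (hmu : mu ∈ Yset w h)
    (tau : Fin n → ℤ)
    (htau : ∀ m : Fin n, tau m =
      if (m : ℕ) < w then ((n : ℤ) + 1 - (m : ℕ)) - mu (w - 1 - (m : ℕ))
      else ((h : ℤ) - (((m : ℕ) - w + 1 : ℕ) : ℤ)) + lam ((m : ℕ) - w + 1)) :
    (∀ m, 0 < tau m ∧ tau m ≤ (n : ℤ) + 1) ∧
    (Function.Injective tau ↔
      ∃ i ≤ w, transposeIn w mu = if i = 0 then lam else stair h w i lam) 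
:= by
  obtain ⟨hlmono, hlw, hlz⟩ := hlam
  obtain ⟨hmmono, hmh, hmz⟩ := hmu
  -- basic strictness / injectivity facts
  have hastrict : ∀ j j' : ℕ, j < j' → aF h mu j < aF h mu j' := by
    intro j j' hj
    have := hmmono j j' (le_of_lt hj)
    simp only [aF]
    omega
  have hainj : Function.Injective (aF h mu) := by
    intro x y hxy
    rcases lt_trichotomy x y with hc | hc | hc
    · exact absurd hxy (ne_of_lt (hastrict x y hc))
    · exact hc
    · exact absurd hxy.symm (ne_of_lt (hastrict y x hc))
  have hbstrict : ∀ k k' : ℕ, k < k' → bF h lam k' < bF h lam k := by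
    intro k k' hk
    have := hlmono k k' (le_of_lt hk)
    simp only [bF]
    omega
  have hbinj : Function.Injective (bF h lam) := by
    intro x y hxy
    rcases lt_trichotomy x y with hc | hc | hc
    · exact absurd hxy.symm (ne_of_lt (hbstrict x y hc))
    · exact hc
    · exact absurd hxy (ne_of_lt (hbstrict y x hc))
  have hcstrict : ∀ s t : ℕ, s < t → cF h w mu t < cF h w mu s := by
    intro s t hst
    have := transpose_antitone w mu hmmono s t (le_of_lt hst)
    simp only [cF]
    omega
  have hcinj : Function.Injective (cF h w mu) := by
    intro x y hxy
    rcases lt_trichotomy x y with hc | hc | hc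
    · exact absurd hxy (ne_of_gt (hcstrict x y hc))
    · exact hc
    · exact absurd hxy.symm (ne_of_gt (hcstrict y x hc))
  -- disjointness of a-values and c-values
  have hdisj : ∀ j, j < w → ∀ t, t < h → aF h mu j ≠ cF h w mu t := by
    intro j hj t ht heq
    simp only [aF, cF] at heq
    have hdual := transpose_lt_iff w mu hmmono j t
    rcases Nat.lt_or_ge t (mu j) with hc | hc
    · have h1 : j < transposeIn w mu t := hdual.mpr ⟨hj, by omega⟩
      omega
    · have h2 : transposeIn w mu t ≤ j := by
        by_contra hcon
        push_neg at hcon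
        have := (hdual.mp hcon).2
        omega
      omega
  -- partition of [1, n+1]
  have hpart : ∀ v : ℤ, 1 ≤ v → v ≤ (n : ℤ) + 1 →
      (∃ j, j < w ∧ v = aF h mu j) ∨ (∃ t, t < h ∧ v = cF h w mu t) := by
    intro v hv1 hv2
    have hmemIcc : v ∈ Finset.Icc (1 : ℤ) ((n : ℤ) + 1) := Finset.mem_Icc.mpr ⟨hv1, hv2⟩
    have hsub : ((Finset.range w).image (aF h mu)) ∪ ((Finset.range h).image (cF h w mu)) ⊆
        Finset.Icc (1 : ℤ) ((n : ℤ) + 1) := by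
      intro x hx
      rw [Finset.mem_Icc]
      rcases Finset.mem_union.mp hx with hx | hx <;>
        simp only [Finset.mem_image, Finset.mem_range] at hx <;>
        obtain ⟨j, hj, rfl⟩ := hx <;> simp only [aF, cF]
      · have := hmh j
        constructor <;> omega
      · have := transpose_le w mu j
        constructor <;> omega
    have hdisjAC : Disjoint ((Finset.range w).image (aF h mu))
        ((Finset.range h).image (cF h w mu)) := by
      rw [Finset.disjoint_left]
      intro x hxA hxC
      simp only [Finset.mem_image, Finset.mem_range] at hxA hxC
      obtain ⟨j, hj, rfl⟩ := hxA
      obtain ⟨t, ht, heq⟩ := hxC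
      exact hdisj j hj t ht heq.symm
    have hcard : (((Finset.range w).image (aF h mu)) ∪
        ((Finset.range h).image (cF h w mu))).card = n + 1 := by
      rw [Finset.card_union_of_disjoint hdisjAC,
        Finset.card_image_of_injective _ hainj,
        Finset.card_image_of_injective _ hcinj,
        Finset.card_range, Finset.card_range]
      omega
    have hIcc_card : (Finset.Icc (1 : ℤ) ((n : ℤ) + 1)).card = n + 1 := by
      rw [Int.card_Icc]
      omega
    have hequ : ((Finset.range w).image (aF h mu)) ∪ ((Finset.range h).image (cF h w mu)) =
        Finset.Icc (1 : ℤ) ((n : ℤ) + 1) :=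
      Finset.eq_of_subset_of_card_le hsub (by omega)
    rw [← hequ] at hmemIcc
    rcases Finset.mem_union.mp hmemIcc with hx | hx <;>
      simp only [Finset.mem_image, Finset.mem_range] at hx
    · obtain ⟨j, hj, heq⟩ := hx
      exact Or.inl ⟨j, hj, heq.symm⟩
    · obtain ⟨t, ht, heq⟩ := hx
      exact Or.inr ⟨t, ht, heq.symm⟩
  -- tau in terms of aF / bF
  have htau_a : ∀ m : Fin n, (m : ℕ) < w → tau m = aF h mu (w - 1 - (m : ℕ)) := by
    intro m hm
    rw [htau m, if_pos hm]
    simp only [aF]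
    omega
  have htau_b : ∀ m : Fin n, w ≤ (m : ℕ) → tau m = bF h lam ((m : ℕ) - w + 1) := by
    intro m hm
    rw [htau m, if_neg (by omega)]
    simp only [bF]
  constructor
  · -- bounds
    intro m
    have hmlt := m.isLt
    rw [htau m]
    split_ifs with hm
    · have h1 := hmh (w - 1 - (m : ℕ))
      constructor <;> omega
    · push_neg at hm
      have h1 := hlw ((m : ℕ) - w + 1)
      constructor <;> omega
  · -- injectivity iff
    have hQiff : Function.Injective tau ↔
        (∀ j, j < w → ∀ k, 1 ≤ k → k ≤ h - 1 → aF h mu j ≠ bF h lam k) := by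
      constructor
      · intro hinj j hj k hk1 hk2 heq
        have hm1 : w - 1 - j < n := by omega
        have hm2 : k + w - 1 < n := by omega
        have e1 : tau ⟨w - 1 - j, hm1⟩ = aF h mu j := by
          rw [htau_a ⟨w - 1 - j, hm1⟩ (by simpa using by omega : ((⟨w - 1 - j, hm1⟩ : Fin n) : ℕ) < w)]
          congr 1
          simp only []
          omega
        have e2 : tau ⟨k + w - 1, hm2⟩ = bF h lam k := by
          rw [htau_b ⟨k + w - 1, hm2⟩ (by simp only []; omega)]
          congr 1
          simp only []
          omega
        have : (⟨w - 1 - j, hm1⟩ : Fin n) = ⟨k + w - 1, hm2⟩ := by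
          apply hinj
          rw [e1, e2, heq]
        have := Fin.mk.injEq _ _ _ _ ▸ this
        omega
      · intro hQ m1 m2 heq
        have h1 := m1.isLt
        have h2 := m2.isLt
        apply Fin.ext
        rcases Nat.lt_or_ge (m1 : ℕ) w with hc1 | hc1 <;>
          rcases Nat.lt_or_ge (m2 : ℕ) w with hc2 | hc2
        · rw [htau_a m1 hc1, htau_a m2 hc2] at heq
          have := hainj heq
          omega
        · rw [htau_a m1 hc1, htau_b m2 hc2] at heq
          exact absurd heq (hQ (w - 1 - (m1 : ℕ)) (by omega) ((m2 : ℕ) - w + 1)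
            (by omega) (by omega))
        · rw [htau_b m1 hc1, htau_a m2 hc2] at heq
          exact absurd heq.symm (hQ (w - 1 - (m2 : ℕ)) (by omega) ((m1 : ℕ) - w + 1)
            (by omega) (by omega))
        · rw [htau_b m1 hc1, htau_b m2 hc2] at heq
          have := hbinj heq
          omega
    have hQB : (∀ j, j < w → ∀ k, 1 ≤ k → k ≤ h - 1 → aF h mu j ≠ bF h lam k) ↔
        (∀ k, 1 ≤ k → k ≤ h - 1 → ∃ t, t < h ∧ bF h lam k = cF h w mu t) := by
      constructor
      · intro hQ k hk1 hk2
        have hb1 : (1 : ℤ) ≤ bF h lam k := by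
          simp only [bF]
          omega
        have hb2 : bF h lam k ≤ (n : ℤ) + 1 := by
          have := hlw k
          simp only [bF]
          omega
        rcases hpart _ hb1 hb2 with ⟨j, hj, hjeq⟩ | ⟨t, ht, hteq⟩
        · exact absurd hjeq.symm (hQ j hj k hk1 hk2)
        · exact ⟨t, ht, hteq⟩
      · intro hB j hj k hk1 hk2 heq
        obtain ⟨t, ht, hteq⟩ := hB k hk1 hk2
        exact hdisj j hj t ht (heq.trans hteq)
    rw [hQiff, hQB]
    exact step4 h w hh hw lam hlmono hlw hlz hl0 mu hmmono hmh
end
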